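/- arXiv:0810.0999 — 10 statements merged into one kernel-verified Lean document; each statement's English description precedes it below -/
import Mathlib

section
/- Let m, n be positive integers, K, G, E, J real constants with J ≠ 0, and let I ⊆ ℝ be a nonempty open interval. Suppose r, φ : I → ℝ are such that r is twice continuously differentiable, φ is differentiable, and for every t ∈ I: r(t) > 0, 1 + K·r(t)² > 0, φ'(t) = J/r(t)², and the energy relation m²·r'(t)²/(2n²(1 + K·r(t)²)) + J²/(2r(t)²) + √(r(t)⁻² + K) + G = E holds. Assume moreover that the set {t ∈ I : r'(t) = 0} has empty interior in I. Then there exists a real constant φ₀ such that for all t ∈ I: √(1 + 2J²(E − G) + K·J⁴) · cos(n·φ(t)/m − φ₀) = 1 + J²·√(r(t)⁻² + K). (In particular 1 + 2J²(E − G) + K·J⁴ ≥ 0.) -/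
/-!
Write `u = √(r⁻² + K)`, `θ = nφ/m`, `F = 1 + J²u` and `w = -(mJ/n) r'/(r u)`. The energy
relation says `w² + F² = 1 + 2J²(E - G) + KJ⁴`, and the chain rule gives `F' = w θ'`.
Differentiating the conservation law gives `w (w' + F θ') = 0`; as `w` vanishes exactly where
`r'` does, on no open set, and `w' + F θ'` is continuous, `w' = -F θ'`. So `(F, w)` turns
rigidly with `θ`: `F cos θ - w sin θ` and `F sin θ + w cos θ` are constant, and harmonic
addition turns `F = a cos θ + b sin θ` into the orbit equation.
-/

open Real

theorem exists_sqrt_sq_add_sq_mul_cos_sub_eq (a b : ℝ) :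
    ∃ φ₀ : ℝ, ∀ θ : ℝ,
      √(a ^ 2 + b ^ 2) * cos (θ - φ₀) = a * cos θ + b * sin θ := by
  set z : ℂ := ⟨a, b⟩
  have hz : ‖z‖ = √(a ^ 2 + b ^ 2) := by
    simp only [z, Complex.norm_def, Complex.normSq_mk, sq]
  refine ⟨z.arg, fun θ => ?_⟩
  rw [cos_sub, ← hz]
  linear_combination cos θ * Complex.norm_mul_cos_arg z + sin θ * Complex.norm_mul_sin_arg z

theorem eqOn_zero_of_mul_eq_zero {X M : Type*} [TopologicalSpace X] [MulZeroClass M]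
    [NoZeroDivisors M] [TopologicalSpace M] [T1Space M] {I : Set X} {p q : X → M}
    (hI : IsOpen I) (hq : ContinuousOn q I) (hpq : ∀ x ∈ I, p x * q x = 0)
    (hp : interior {x | x ∈ I ∧ p x = 0} = ∅) : Set.EqOn q 0 I := by
  have hsub : I ∩ q ⁻¹' {0}ᶜ ⊆ {x | x ∈ I ∧ p x = 0} := fun x ⟨hx, hqx⟩ =>
    ⟨hx, (mul_eq_zero.1 (hpq x hx)).resolve_right hqx⟩
  have hempty : I ∩ q ⁻¹' {0}ᶜ = ∅ :=
    Set.subset_empty_iff.1 <| hp ▸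
      interior_maximal hsub (hq.isOpen_inter_preimage hI isOpen_compl_singleton)
  intro x hx
  by_contra hqx
  exact hempty.subset ⟨hx, hqx⟩

section Rotation

variable {I : Set ℝ} {F w θ θ' : ℝ → ℝ}

theorem exists_eq_const_of_hasDerivAt_zero (hI : IsOpen I) (hI' : IsPreconnected I)
    {f : ℝ → ℝ} (hf : ∀ t ∈ I, HasDerivAt f 0 t) : ∃ c, ∀ t ∈ I, f t = c :=
  hI.exists_is_const_of_deriv_eq_zero hI'
    (fun t ht => (hf t ht).differentiableAt.differentiableWithinAt) fun t ht => (hf t ht).deriv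

theorem hasDerivAt_neg_of_sq_add_sq_eq_const (hI : IsOpen I) (hw : ContDiffOn ℝ 1 w I)
    (hθ' : ContinuousOn θ' I) (hF : ∀ t ∈ I, HasDerivAt F (w t * θ' t) t) {c : ℝ}
    (hc : ∀ t ∈ I, w t ^ 2 + F t ^ 2 = c) (hw0 : interior {t | t ∈ I ∧ w t = 0} = ∅) :
    ∀ t ∈ I, HasDerivAt w (-(F t * θ' t)) t := by
  have hwd : ∀ t ∈ I, HasDerivAt w (deriv w t) t := fun t ht =>
    ((hw.differentiableOn one_ne_zero t ht).differentiableAt (hI.mem_nhds ht)).hasDerivAt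
  have hFc : ContinuousOn F I := fun t ht => (hF t ht).continuousAt.continuousWithinAt
  have hq : ContinuousOn (fun t => deriv w t + F t * θ' t) I :=
    (hw.continuousOn_deriv_of_isOpen hI le_rfl).add (hFc.mul hθ')
  have hwq : ∀ t ∈ I, w t * (deriv w t + F t * θ' t) = 0 := by
    intro t ht
    have hlocal : (fun s => w s ^ 2 + F s ^ 2) =ᶠ[nhds t] fun _ => c :=
      Filter.eventually_of_mem (hI.mem_nhds ht) hc
    have h := (((hwd t ht).pow 2).add ((hF t ht).pow 2)).unique
      ((hasDerivAt_const t c).congr_of_eventuallyEq hlocal)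
    push_cast at h
    linear_combination h / 2
  intro t ht
  have hq0 : deriv w t + F t * θ' t = 0 := eqOn_zero_of_mul_eq_zero hI hq hwq hw0 ht
  exact (hwd t ht).congr_deriv (by linear_combination hq0)

theorem exists_sqrt_mul_cos_sub_eq_of_hasDerivAt (hI : IsOpen I) (hI' : IsPreconnected I)
    {t₀ : ℝ} (ht₀ : t₀ ∈ I) (hθ : ∀ t ∈ I, HasDerivAt θ (θ' t) t)
    (hF : ∀ t ∈ I, HasDerivAt F (w t * θ' t) t)
    (hw : ∀ t ∈ I, HasDerivAt w (-(F t * θ' t)) t) :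
    ∃ φ₀, ∀ t ∈ I, √(F t₀ ^ 2 + w t₀ ^ 2) * cos (θ t - φ₀) = F t := by
  obtain ⟨a, ha⟩ := exists_eq_const_of_hasDerivAt_zero hI hI'
    (f := fun t => F t * cos (θ t) - w t * sin (θ t)) fun t ht =>
      (((hF t ht).mul (hθ t ht).cos).sub ((hw t ht).mul (hθ t ht).sin)).congr_deriv (by ring)
  obtain ⟨b, hb⟩ := exists_eq_const_of_hasDerivAt_zero hI hI'
    (f := fun t => F t * sin (θ t) + w t * cos (θ t)) fun t ht =>
      (((hF t ht).mul (hθ t ht).sin).add ((hw t ht).mul (hθ t ht).cos)).congr_deriv (by ring)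
  obtain ⟨φ₀, hφ₀⟩ := exists_sqrt_sq_add_sq_mul_cos_sub_eq a b
  refine ⟨φ₀, fun t ht => ?_⟩
  have hab : F t₀ ^ 2 + w t₀ ^ 2 = a ^ 2 + b ^ 2 := by
    rw [← ha t₀ ht₀, ← hb t₀ ht₀]
    linear_combination (F t₀ ^ 2 + w t₀ ^ 2) * (sin_sq_add_cos_sq (θ t₀)).symm
  rw [hab, hφ₀, ← ha t ht, ← hb t ht]
  linear_combination F t * sin_sq_add_cos_sq (θ t)

end Rotation

theorem inv_sq_add_pos_of_one_add_mul_sq_pos {x K : ℝ} (hx : x ≠ 0) (h : 0 < 1 + K * x ^ 2) :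
    0 < (x ^ 2)⁻¹ + K := by
  have : (x ^ 2)⁻¹ + K = (1 + K * x ^ 2) / x ^ 2 := by field_simp
  rw [this]
  positivity

namespace BertrandTypeI

variable (m n K J : ℝ) (r : ℝ → ℝ)

noncomputable def binet (t : ℝ) : ℝ := 1 + J ^ 2 * √((r t ^ 2)⁻¹ + K)

/-- `d(binet)/dθ` along a trajectory with `φ' = J/r²`, where `θ = nφ/m`. -/
noncomputable def binetSlope (t : ℝ) : ℝ :=
  -(m * J / n) * deriv r t / (r t * √((r t ^ 2)⁻¹ + K))

variable {m n K J r}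

theorem hasDerivAt_binet {t : ℝ} (hm : m ≠ 0) (hn : n ≠ 0) (hr : DifferentiableAt ℝ r t)
    (hr0 : r t ≠ 0) (hK : 0 < (r t ^ 2)⁻¹ + K) :
    HasDerivAt (binet K J r) (binetSlope m n K J r t * (n * J / (m * r t ^ 2))) t := by
  have h := ((((hr.hasDerivAt.pow 2).inv (pow_ne_zero 2 hr0)).add_const K).sqrt
    hK.ne').const_mul (J ^ 2) |>.const_add 1
  refine h.congr_deriv ?_
  have hu : √((r t ^ 2)⁻¹ + K) ≠ 0 := (sqrt_pos.2 hK).ne'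
  simp only [binetSlope, Pi.pow_apply, Pi.inv_apply]
  generalize √((r t ^ 2)⁻¹ + K) = u at *
  field_simp
  ring

theorem binetSlope_eq_zero_iff {t : ℝ} (hm : m ≠ 0) (hn : n ≠ 0) (hJ : J ≠ 0)
    (hr0 : r t ≠ 0) (hK : 0 < (r t ^ 2)⁻¹ + K) : binetSlope m n K J r t = 0 ↔ deriv r t = 0 := by
  simp [binetSlope, hm, hn, hJ, hr0, (sqrt_pos.2 hK).ne']

theorem binetSlope_sq_add_binet_sq {t G E : ℝ} (hn : n ≠ 0) (hr0 : r t ≠ 0)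
    (hK : 0 < (r t ^ 2)⁻¹ + K)
    (henergy : m ^ 2 * deriv r t ^ 2 / (2 * n ^ 2 * (1 + K * r t ^ 2))
      + J ^ 2 / (2 * r t ^ 2) + √((r t ^ 2)⁻¹ + K) + G = E) :
    binetSlope m n K J r t ^ 2 + binet K J r t ^ 2 = 1 + 2 * J ^ 2 * (E - G) + K * J ^ 4 := by
  have hu0 : √((r t ^ 2)⁻¹ + K) ≠ 0 := (sqrt_pos.2 hK).ne'
  have hu2 : √((r t ^ 2)⁻¹ + K) ^ 2 = (r t ^ 2)⁻¹ + K := sq_sqrt hK.le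
  simp only [binetSlope, binet]
  generalize √((r t ^ 2)⁻¹ + K) = u at *
  have hmet : 1 + K * r t ^ 2 = r t ^ 2 * u ^ 2 := by rw [hu2]; field_simp
  rw [hmet] at henergy
  field_simp at henergy hu2 ⊢
  linear_combination J ^ 2 * henergy + J ^ 4 * n ^ 2 * u ^ 2 * hu2

theorem contDiffOn_binetSlope {I : Set ℝ} (hI : IsOpen I) (hr : ContDiffOn ℝ 2 r I)
    (hr0 : ∀ t ∈ I, r t ≠ 0) (hK : ∀ t ∈ I, 0 < (r t ^ 2)⁻¹ + K) :
    ContDiffOn ℝ 1 (binetSlope m n K J r) I := by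
  have hr1 : ContDiffOn ℝ 1 r I := hr.of_le one_le_two
  have hu : ContDiffOn ℝ 1 (fun t => √((r t ^ 2)⁻¹ + K)) I :=
    (((hr1.pow 2).inv fun t ht => pow_ne_zero 2 (hr0 t ht)).add contDiffOn_const).sqrt
      fun t ht => (hK t ht).ne'
  exact (contDiffOn_const.mul (hr.deriv_of_isOpen hI le_rfl)).div (hr1.mul hu)
    fun t ht => mul_ne_zero (hr0 t ht) (sqrt_pos.2 (hK t ht)).ne'

end BertrandTypeI

open BertrandTypeI

/-- Integration of equatorial trajectories of the type I Bertrand Hamiltonian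
(Proposition 3.1, type I, stated for trajectories in time). -/
theorem typeI_trajectory_orbit_equation
    (m n : ℕ) (hm : 0 < m) (hn : 0 < n)
    (K G E J : ℝ) (hJ : J ≠ 0)
    (I : Set ℝ) (hIopen : IsOpen I) (hIconn : I.OrdConnected) (hIne : I.Nonempty)
    (r φ : ℝ → ℝ)
    (hr : ContDiffOn ℝ 2 r I) (hφ : DifferentiableOn ℝ φ I)
    (hrpos : ∀ t ∈ I, 0 < r t)
    (hmet : ∀ t ∈ I, 0 < 1 + K * r t ^ 2)
    (hang : ∀ t ∈ I, deriv φ t = J / r t ^ 2)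
    (henergy : ∀ t ∈ I,
      (m : ℝ) ^ 2 * (deriv r t) ^ 2 / (2 * (n : ℝ) ^ 2 * (1 + K * r t ^ 2))
        + J ^ 2 / (2 * r t ^ 2) + Real.sqrt ((r t ^ 2)⁻¹ + K) + G = E)
    (hcrit : interior {t | t ∈ I ∧ deriv r t = 0} = ∅) :
    ∃ φ₀ : ℝ, ∀ t ∈ I,
      Real.sqrt (1 + 2 * J ^ 2 * (E - G) + K * J ^ 4)
          * Real.cos ((n : ℝ) * φ t / (m : ℝ) - φ₀)
        = 1 + J ^ 2 * Real.sqrt ((r t ^ 2)⁻¹ + K) := by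
  obtain ⟨t₀, ht₀⟩ := hIne
  have hm' : (m : ℝ) ≠ 0 := by positivity
  have hn' : (n : ℝ) ≠ 0 := by positivity
  have hr0 : ∀ t ∈ I, r t ≠ 0 := fun t ht => (hrpos t ht).ne'
  have hK : ∀ t ∈ I, 0 < (r t ^ 2)⁻¹ + K := fun t ht =>
    inv_sq_add_pos_of_one_add_mul_sq_pos (hr0 t ht) (hmet t ht)
  have hθ : ∀ t ∈ I, HasDerivAt (fun s => n * φ s / m) (n * J / (m * r t ^ 2)) t := by
    intro t ht
    have h := ((hφ t ht).differentiableAt (hIopen.mem_nhds ht)).hasDerivAt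
    exact ((hang t ht ▸ h).const_mul (n : ℝ)).div_const (m : ℝ) |>.congr_deriv (by field_simp)
  have hθ' : ContinuousOn (fun t => n * J / (m * r t ^ 2)) I :=
    continuousOn_const.div (continuousOn_const.mul (hr.continuousOn.pow 2)) fun t ht =>
      mul_ne_zero hm' (pow_ne_zero 2 (hr0 t ht))
  have hF : ∀ t ∈ I,
      HasDerivAt (binet K J r) (binetSlope m n K J r t * (n * J / (m * r t ^ 2))) t :=
    fun t ht => hasDerivAt_binet hm' hn'
      ((hr.differentiableOn two_ne_zero t ht).differentiableAt (hIopen.mem_nhds ht))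
      (hr0 t ht) (hK t ht)
  have hconst : ∀ t ∈ I, binetSlope m n K J r t ^ 2 + binet K J r t ^ 2 =
      1 + 2 * J ^ 2 * (E - G) + K * J ^ 4 := fun t ht =>
    binetSlope_sq_add_binet_sq hn' (hr0 t ht) (hK t ht) (henergy t ht)
  have hcrit' : interior {t | t ∈ I ∧ binetSlope m n K J r t = 0} = ∅ := by
    rwa [Set.ext fun t => and_congr_right fun ht =>
      binetSlope_eq_zero_iff hm' hn' hJ (hr0 t ht) (hK t ht)]
  have hw := hasDerivAt_neg_of_sq_add_sq_eq_const hIopen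
    (contDiffOn_binetSlope hIopen hr hr0 hK) hθ' hF hconst hcrit'
  obtain ⟨φ₀, hφ₀⟩ :=
    exists_sqrt_mul_cos_sub_eq_of_hasDerivAt hIopen hIconn.isPreconnected ht₀ hθ hF hw
  refine ⟨φ₀, fun t ht => ?_⟩
  rw [← hconst t₀ ht₀, add_comm]
  exact hφ₀ t ht
end

section
/- Let m, n be positive integers, D, K, G, E, J real constants with J ≠ 0, σ ∈ {1, −1}, and let I ⊆ ℝ be a nonempty open interval. Suppose r, φ : I → ℝ are such that r is twice continuously differentiable, φ is differentiable, and for every t ∈ I: r(t) > 0, (1 − D·r(t)²)² − K·r(t)⁴ > 0, 1 − D·r(t)² + σ·S(t) > 0 where S(t) := √((1 − D·r(t)²)² − K·r(t)⁴), φ'(t) = J/r(t)², and the energy relation m²(1 − D·r(t)² + σ·S(t))·r'(t)²/(n²·S(t)²) + J²/(2r(t)²) + G − σ·r(t)²/(1 − D·r(t)² + σ·S(t)) = E holds. Assume moreover that the set {t ∈ I : r'(t) = 0} has empty interior in I. Then there exists a real constant φ₀ such that for all t ∈ I: √((2E − 2G − D·J²)² + 4σ·J² − K·J⁴) · cos(n·φ(t)/m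 − φ₀) = J²·r(t)⁻²·(1 − D·r(t)² + σ·S(t)) + D·J² + 2G − 2E. (In particular (2E − 2G − DJ²)² + 4σJ² − KJ⁴ ≥ 0.) -/
/-!
With `v = r⁻² (1 - D r² + σ S)` and `ψ = n φ / m`, put `W = J² v(r) + D J² + 2G - 2E` and
`q = dW/dψ`. The relation `r² v - 1 + D r² = σ S` squares to the quadratic
`v² + 2 (D - r⁻²) v + K = 0`, which turns the energy relation into `W² + q² = Δ` with
`Δ = (2E - 2G - D J²)² + 4σ J² - K J⁴`. Differentiating this in `t` gives `dq/dψ = -W` wherever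
`q ≠ 0`, i.e. wherever `r' ≠ 0`; these times are dense and `q` is `C¹`, so the harmonic equation
holds everywhere and `W = √Δ cos (ψ - φ₀)`.
-/

open Real Filter Topology

theorem IsOpen.subset_closure_sep_not {X : Type*} [TopologicalSpace X] {I : Set X}
    (hI : IsOpen I) {p : X → Prop} (h : interior {t | t ∈ I ∧ p t} = ∅) :
    I ⊆ closure {t | t ∈ I ∧ ¬p t} := by
  convert (interior_eq_empty_iff_dense_compl.1 h).open_subset_closure_inter hI using 2
  ext t
  simp +contextual

theorem eq_neg_mul_of_sq_add_sq_eventually_const {W q : ℝ → ℝ} {t a b c : ℝ}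
    (hW : HasDerivAt W (a * q t) t) (hq : HasDerivAt q b t)
    (hc : ∀ᶠ s in 𝓝 t, W s ^ 2 + q s ^ 2 = c) (hq0 : q t ≠ 0) : b = -(a * W t) := by
  have hderiv := ((hW.pow 2).add (hq.pow 2)).unique
    ((hasDerivAt_const t c).congr_of_eventuallyEq hc)
  have : q t * (b + a * W t) = 0 := by linear_combination hderiv / 2
  linear_combination (mul_eq_zero.1 this).resolve_left hq0

theorem hasDerivAt_neg_mul_of_sq_add_sq_eq {I : Set ℝ} (hI : IsOpen I) {W q ψ' : ℝ → ℝ} {c : ℝ}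
    (hW : ∀ t ∈ I, HasDerivAt W (ψ' t * q t) t) (hq : ContDiffOn ℝ 1 q I)
    (hψW : ContinuousOn (fun t => ψ' t * W t) I) (hc : ∀ t ∈ I, W t ^ 2 + q t ^ 2 = c)
    (hq0 : interior {t | t ∈ I ∧ q t = 0} = ∅) :
    ∀ t ∈ I, HasDerivAt q (-(ψ' t * W t)) t := by
  have hqd (t : ℝ) (ht : t ∈ I) : HasDerivAt q (deriv q t) t :=
    ((hq.differentiableOn one_ne_zero).differentiableAt (hI.mem_nhds ht)).hasDerivAt
  have hq' : Set.EqOn (deriv q) (fun t => -(ψ' t * W t)) I :=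
    Set.EqOn.of_subset_closure (s := {t | t ∈ I ∧ ¬q t = 0})
      (fun t ⟨ht, hqt⟩ => eq_neg_mul_of_sq_add_sq_eventually_const (hW t ht) (hqd t ht)
        (eventually_of_mem (hI.mem_nhds ht) hc) hqt)
      (hq.continuousOn_deriv_of_isOpen hI le_rfl) hψW.neg (fun t ht => ht.1)
      (hI.subset_closure_sep_not hq0)
  exact fun t ht => (hqd t ht).congr_deriv (hq' ht)

theorem exists_sqrt_mul_cos_eq_of_hasDerivAt {I : Set ℝ} (hIo : IsOpen I)
    (hIc : IsPreconnected I) {W q ψ ψ' : ℝ → ℝ} {c : ℝ}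
    (hW : ∀ t ∈ I, HasDerivAt W (ψ' t * q t) t) (hq : ∀ t ∈ I, HasDerivAt q (-(ψ' t * W t)) t)
    (hψ : ∀ t ∈ I, HasDerivAt ψ (ψ' t) t) (hc : ∀ t ∈ I, W t ^ 2 + q t ^ 2 = c) :
    ∃ φ₀, ∀ t ∈ I, √c * cos (ψ t - φ₀) = W t := by
  have hconst (f : ℝ → ℝ) (hf : ∀ t ∈ I, HasDerivAt f 0 t) : ∃ a, ∀ t ∈ I, f t = a :=
    hIo.exists_is_const_of_deriv_eq_zero hIc
      (fun t ht => (hf t ht).differentiableAt.differentiableWithinAt) fun t ht => (hf t ht).deriv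
  -- the real and imaginary parts of `(W + i q) e^{iψ}`
  obtain ⟨a, ha⟩ := hconst (fun t => W t * cos (ψ t) - q t * sin (ψ t)) fun t ht =>
    (((hW t ht).mul (hψ t ht).cos).sub ((hq t ht).mul (hψ t ht).sin)).congr_deriv (by ring)
  obtain ⟨b, hb⟩ := hconst (fun t => W t * sin (ψ t) + q t * cos (ψ t)) fun t ht =>
    (((hW t ht).mul (hψ t ht).sin).add ((hq t ht).mul (hψ t ht).cos)).congr_deriv (by ring)
  rcases I.eq_empty_or_nonempty with rfl | ⟨t₀, ht₀⟩
  · simp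
  set z : ℂ := ⟨a, b⟩
  have hz : ‖z‖ = √c := by
    rw [Complex.norm_def, Complex.normSq_mk, ← hc t₀ ht₀, ← ha t₀ ht₀, ← hb t₀ ht₀]
    congr 1
    linear_combination (W t₀ ^ 2 + q t₀ ^ 2) * sin_sq_add_cos_sq (ψ t₀)
  refine ⟨z.arg, fun t ht => ?_⟩
  have hre : z.re = a := rfl
  have him : z.im = b := rfl
  rw [cos_sub, ← hz]
  linear_combination cos (ψ t) * z.norm_mul_cos_arg + sin (ψ t) * z.norm_mul_sin_arg
    + cos (ψ t) * hre + sin (ψ t) * him - cos (ψ t) * ha t ht - sin (ψ t) * hb t ht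
    + W t * sin_sq_add_cos_sq (ψ t)

namespace TypeIIBertrand

noncomputable def S (D K x : ℝ) : ℝ := √((1 - D * x ^ 2) ^ 2 - K * x ^ 4)

noncomputable def v (D K σ x : ℝ) : ℝ := (x ^ 2)⁻¹ * (1 - D * x ^ 2 + σ * S D K x)

variable {D K σ x : ℝ}

theorem S_sq (h : 0 ≤ (1 - D * x ^ 2) ^ 2 - K * x ^ 4) :
    S D K x ^ 2 = (1 - D * x ^ 2) ^ 2 - K * x ^ 4 :=
  sq_sqrt h

theorem v_quadratic (hσ : σ ^ 2 = 1) (hx : x ≠ 0) (h : 0 ≤ (1 - D * x ^ 2) ^ 2 - K * x ^ 4) :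
    v D K σ x ^ 2 + 2 * (D - (x ^ 2)⁻¹) * v D K σ x + K = 0 := by
  unfold v
  field_simp
  linear_combination S D K x ^ 2 * hσ + S_sq h

theorem v_ne_zero (hx : x ≠ 0) (hP : 1 - D * x ^ 2 + σ * S D K x ≠ 0) : v D K σ x ≠ 0 :=
  mul_ne_zero (inv_ne_zero (pow_ne_zero 2 hx)) hP

theorem S_pos (h : 0 < (1 - D * x ^ 2) ^ 2 - K * x ^ 4) : 0 < S D K x :=
  sqrt_pos.2 h

theorem contDiffAt_S {k : WithTop ℕ∞} (h : 0 < (1 - D * x ^ 2) ^ 2 - K * x ^ 4) :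
    ContDiffAt ℝ k (S D K) x :=
  ContDiffAt.sqrt (by fun_prop) h.ne'

theorem contDiffAt_v {k : WithTop ℕ∞} (hx : x ≠ 0) (h : 0 < (1 - D * x ^ 2) ^ 2 - K * x ^ 4) :
    ContDiffAt ℝ k (v D K σ) x :=
  ((contDiffAt_id.pow 2).inv (pow_ne_zero 2 hx)).mul
    (by have := contDiffAt_S (k := k) h; fun_prop)

theorem hasDerivAt_v (hσ : σ ^ 2 = 1) (hx : x ≠ 0) (h : 0 < (1 - D * x ^ 2) ^ 2 - K * x ^ 4) :
    HasDerivAt (v D K σ) (-2 * σ * v D K σ x / (x * S D K x)) x := by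
  have hS : HasDerivAt (S D K)
      ((-(4 * D * (1 - D * x ^ 2) * x) - 4 * K * x ^ 3) / (2 * S D K x)) x := by
    refine HasDerivAt.sqrt ?_ h.ne'
    exact (((((hasDerivAt_id x).pow 2).const_mul D).const_sub 1).pow 2 |>.sub
      (((hasDerivAt_id x).pow 4).const_mul K)).congr_deriv (by
        simp only [Nat.cast_ofNat, Pi.pow_apply, id_eq, Nat.add_one_sub_one, pow_one]
        ring)
  have hS0 : S D K x ≠ 0 := (S_pos h).ne'
  refine ((((hasDerivAt_id x).pow 2).inv (pow_ne_zero 2 hx)).mul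
    ((((hasDerivAt_id x).pow 2).const_mul D).const_sub 1 |>.add (hS.const_mul σ))).congr_deriv ?_
  simp only [v, id, Pi.pow_apply, Pi.inv_apply, Pi.add_apply, Nat.cast_ofNat, Nat.add_one_sub_one,
    pow_one]
  field_simp
  linear_combination 4 * S D K x * hσ - 4 * σ * S_sq h.le

theorem sq_add_sq_eq_of_energy {m n J G E x' : ℝ} (hσ : σ ^ 2 = 1) (hx : x ≠ 0)
    (hS : 0 ≤ (1 - D * x ^ 2) ^ 2 - K * x ^ 4) (hP : 1 - D * x ^ 2 + σ * S D K x ≠ 0)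
    (henergy : m ^ 2 * (1 - D * x ^ 2 + σ * S D K x) * x' ^ 2 / (n ^ 2 * S D K x ^ 2)
        + J ^ 2 / (2 * x ^ 2) + G - σ * x ^ 2 / (1 - D * x ^ 2 + σ * S D K x) = E) :
    (J ^ 2 * v D K σ x + (D * J ^ 2 + 2 * G - 2 * E)) ^ 2
        + (-2 * σ * m * J * x * v D K σ x * x' / (n * S D K x)) ^ 2
      = (2 * E - 2 * G - D * J ^ 2) ^ 2 + 4 * σ * J ^ 2 - K * J ^ 4 := by
  have hv : x ^ 2 * v D K σ x = 1 - D * x ^ 2 + σ * S D K x := by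
    unfold v; field_simp
  rw [← hv] at henergy hP
  have hcancel : σ * x ^ 2 / (x ^ 2 * v D K σ x) * v D K σ x = σ := by
    field_simp [right_ne_zero_of_mul hP]
  linear_combination J ^ 4 * v_quadratic hσ hx hS + 4 * J ^ 2 * v D K σ x * henergy
    + 4 * J ^ 2 * hcancel
    + 4 * J ^ 2 * m ^ 2 * x ^ 2 * v D K σ x ^ 2 * x' ^ 2 / (n ^ 2 * S D K x ^ 2) * hσ

section Trajectory

variable {k : WithTop ℕ∞} {m n J : ℝ} {I : Set ℝ} {r : ℝ → ℝ}

theorem contDiffOn_S_comp (hr : ContDiffOn ℝ k r I)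
    (h : ∀ t ∈ I, 0 < (1 - D * r t ^ 2) ^ 2 - K * r t ^ 4) :
    ContDiffOn ℝ k (fun t => S D K (r t)) I := fun t ht =>
  (contDiffAt_S (h t ht)).comp_contDiffWithinAt t (hr t ht)

theorem contDiffOn_v_comp (hr : ContDiffOn ℝ k r I) (hr0 : ∀ t ∈ I, r t ≠ 0)
    (h : ∀ t ∈ I, 0 < (1 - D * r t ^ 2) ^ 2 - K * r t ^ 4) :
    ContDiffOn ℝ k (fun t => v D K σ (r t)) I := fun t ht =>
  (contDiffAt_v (hr0 t ht) (h t ht)).comp_contDiffWithinAt t (hr t ht)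

/-- `dW/dψ` for `W = J² v(r)`, given `dψ/dt = n J / (m r²)`. -/
noncomputable def orbitSlope (D K σ m n J : ℝ) (r : ℝ → ℝ) (t : ℝ) : ℝ :=
  -2 * σ * m * J * r t * v D K σ (r t) * deriv r t / (n * S D K (r t))

theorem hasDerivAt_orbit {t c : ℝ} (hσ : σ ^ 2 = 1) (hm : m ≠ 0) (hn : n ≠ 0)
    (hr : DifferentiableAt ℝ r t) (hr0 : r t ≠ 0)
    (h : 0 < (1 - D * r t ^ 2) ^ 2 - K * r t ^ 4) :
    HasDerivAt (fun t => J ^ 2 * v D K σ (r t) + c)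
      (n * J / (m * r t ^ 2) * orbitSlope D K σ m n J r t) t := by
  have hS0 : S D K (r t) ≠ 0 := (S_pos h).ne'
  refine ((((hasDerivAt_v hσ hr0 h).comp t hr.hasDerivAt).const_mul _).add_const _).congr_deriv ?_
  simp only [orbitSlope]
  field_simp

theorem contDiffOn_orbitSlope (hI : IsOpen I) (hn : n ≠ 0) (hr : ContDiffOn ℝ 2 r I)
    (hr0 : ∀ t ∈ I, r t ≠ 0) (h : ∀ t ∈ I, 0 < (1 - D * r t ^ 2) ^ 2 - K * r t ^ 4) :
    ContDiffOn ℝ 1 (orbitSlope D K σ m n J r) I := by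
  have hr1 : ContDiffOn ℝ 1 r I := hr.of_le (by norm_num)
  exact (((contDiffOn_const.mul hr1).mul (contDiffOn_v_comp hr1 hr0 h)).mul
    (hr.deriv_of_isOpen hI (by norm_num))).div (contDiffOn_const.mul (contDiffOn_S_comp hr1 h))
    fun t ht => mul_ne_zero hn (S_pos (h t ht)).ne'

theorem orbitSlope_eq_zero_iff {t : ℝ} (hσ : σ ≠ 0) (hm : m ≠ 0) (hn : n ≠ 0) (hJ : J ≠ 0)
    (hr0 : r t ≠ 0) (h : 0 < (1 - D * r t ^ 2) ^ 2 - K * r t ^ 4)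
    (hP : 1 - D * r t ^ 2 + σ * S D K (r t) ≠ 0) :
    orbitSlope D K σ m n J r t = 0 ↔ deriv r t = 0 := by
  simp [orbitSlope, hσ, hm, hn, hJ, hr0, v_ne_zero hr0 hP, (S_pos h).ne']

end Trajectory

end TypeIIBertrand

open TypeIIBertrand

theorem typeII_trajectory_orbit_equation_general
    (m n : ℕ) (hm : 0 < m) (hn : 0 < n)
    (D K G E J σ : ℝ) (hJ : J ≠ 0) (hσ : σ = 1 ∨ σ = -1)
    (I : Set ℝ) (hIopen : IsOpen I) (hIconn : I.OrdConnected)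
    (r φ : ℝ → ℝ)
    (hr : ContDiffOn ℝ 2 r I) (hφ : DifferentiableOn ℝ φ I)
    (hrpos : ∀ t ∈ I, 0 < r t)
    (hmet : ∀ t ∈ I, 0 < (1 - D * r t ^ 2) ^ 2 - K * r t ^ 4)
    (hmet' : ∀ t ∈ I,
      0 < 1 - D * r t ^ 2 + σ * Real.sqrt ((1 - D * r t ^ 2) ^ 2 - K * r t ^ 4))
    (hang : ∀ t ∈ I, deriv φ t = J / r t ^ 2)
    (henergy : ∀ t ∈ I,
      (m : ℝ) ^ 2
            * (1 - D * r t ^ 2 + σ * Real.sqrt ((1 - D * r t ^ 2) ^ 2 - K * r t ^ 4))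
            * (deriv r t) ^ 2
            / ((n : ℝ) ^ 2 * (Real.sqrt ((1 - D * r t ^ 2) ^ 2 - K * r t ^ 4)) ^ 2)
        + J ^ 2 / (2 * r t ^ 2) + G
        - σ * r t ^ 2
            / (1 - D * r t ^ 2 + σ * Real.sqrt ((1 - D * r t ^ 2) ^ 2 - K * r t ^ 4))
        = E)
    (hcrit : interior {t | t ∈ I ∧ deriv r t = 0} = ∅) :
    ∃ φ₀ : ℝ, ∀ t ∈ I,
      Real.sqrt ((2 * E - 2 * G - D * J ^ 2) ^ 2 + 4 * σ * J ^ 2 - K * J ^ 4)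
          * Real.cos ((n : ℝ) * φ t / (m : ℝ) - φ₀)
        = J ^ 2 * (r t ^ 2)⁻¹
              * (1 - D * r t ^ 2 + σ * Real.sqrt ((1 - D * r t ^ 2) ^ 2 - K * r t ^ 4))
            + D * J ^ 2 + 2 * G - 2 * E := by
  have hσ2 : σ ^ 2 = 1 := by rcases hσ with rfl | rfl <;> norm_num
  have hm0 : (m : ℝ) ≠ 0 := Nat.cast_ne_zero.2 hm.ne'
  have hn0 : (n : ℝ) ≠ 0 := Nat.cast_ne_zero.2 hn.ne'
  have hr0 (t : ℝ) (ht : t ∈ I) : r t ≠ 0 := (hrpos t ht).ne'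
  set ψ' : ℝ → ℝ := fun t => n * J / (m * r t ^ 2)
  set W : ℝ → ℝ := fun t => J ^ 2 * v D K σ (r t) + (D * J ^ 2 + 2 * G - 2 * E)
  have hψ (t : ℝ) (ht : t ∈ I) : HasDerivAt (fun t => n * φ t / m) (ψ' t) t :=
    (((hang t ht ▸ (hφ.differentiableAt (hIopen.mem_nhds ht)).hasDerivAt).const_mul _).div_const
      _).congr_deriv (by simp only [ψ']; field_simp)
  have hW (t : ℝ) (ht : t ∈ I) : HasDerivAt W (ψ' t * orbitSlope D K σ m n J r t) t :=
    hasDerivAt_orbit hσ2 hm0 hn0 ((hr.differentiableOn (by norm_num)).differentiableAt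
      (hIopen.mem_nhds ht)) (hr0 t ht) (hmet t ht)
  have hnorm (t : ℝ) (ht : t ∈ I) := sq_add_sq_eq_of_energy (m := m) (n := n) (J := J) hσ2
    (hr0 t ht) (hmet t ht).le (hmet' t ht).ne' (henergy t ht)
  have hψW : ContinuousOn (fun t => ψ' t * W t) I :=
    (continuousOn_const.div (continuousOn_const.mul (hr.continuousOn.pow 2))
      fun t ht => mul_ne_zero hm0 (pow_ne_zero 2 (hr0 t ht))).mul
      ((continuousOn_const.mul (contDiffOn_v_comp hr hr0 hmet).continuousOn).add
        continuousOn_const)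
  have hslope0 : {t | t ∈ I ∧ orbitSlope D K σ m n J r t = 0} = {t | t ∈ I ∧ deriv r t = 0} :=
    Set.ext fun t => and_congr_right fun ht => orbitSlope_eq_zero_iff
      (by rintro rfl; norm_num at hσ2) hm0 hn0 hJ (hr0 t ht) (hmet t ht) (hmet' t ht).ne'
  obtain ⟨φ₀, hφ₀⟩ := exists_sqrt_mul_cos_eq_of_hasDerivAt hIopen hIconn.isPreconnected hW
    (hasDerivAt_neg_mul_of_sq_add_sq_eq hIopen hW
      (contDiffOn_orbitSlope hIopen hn0 hr hr0 hmet) hψW hnorm (hslope0 ▸ hcrit)) hψ hnorm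
  exact ⟨φ₀, fun t ht => (hφ₀ t ht).trans (by simp only [W, v, S]; ring)⟩

/-- Integration of equatorial trajectories of the type II Bertrand Hamiltonian
(Proposition 3.1, type II, stated for trajectories in time). -/
theorem typeII_trajectory_orbit_equation
    (m n : ℕ) (hm : 0 < m) (hn : 0 < n)
    (D K G E J σ : ℝ) (hJ : J ≠ 0) (hσ : σ = 1 ∨ σ = -1)
    (I : Set ℝ) (hIopen : IsOpen I) (hIconn : I.OrdConnected) (hIne : I.Nonempty)
    (r φ : ℝ → ℝ)
    (hr : ContDiffOn ℝ 2 r I) (hφ : DifferentiableOn ℝ φ I)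
    (hrpos : ∀ t ∈ I, 0 < r t)
    (hmet : ∀ t ∈ I, 0 < (1 - D * r t ^ 2) ^ 2 - K * r t ^ 4)
    (hmet' : ∀ t ∈ I,
      0 < 1 - D * r t ^ 2 + σ * Real.sqrt ((1 - D * r t ^ 2) ^ 2 - K * r t ^ 4))
    (hang : ∀ t ∈ I, deriv φ t = J / r t ^ 2)
    (henergy : ∀ t ∈ I,
      (m : ℝ) ^ 2
            * (1 - D * r t ^ 2 + σ * Real.sqrt ((1 - D * r t ^ 2) ^ 2 - K * r t ^ 4))
            * (deriv r t) ^ 2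
            / ((n : ℝ) ^ 2 * (Real.sqrt ((1 - D * r t ^ 2) ^ 2 - K * r t ^ 4)) ^ 2)
        + J ^ 2 / (2 * r t ^ 2) + G
        - σ * r t ^ 2
            / (1 - D * r t ^ 2 + σ * Real.sqrt ((1 - D * r t ^ 2) ^ 2 - K * r t ^ 4))
        = E)
    (hcrit : interior {t | t ∈ I ∧ deriv r t = 0} = ∅) :
    ∃ φ₀ : ℝ, ∀ t ∈ I,
      Real.sqrt ((2 * E - 2 * G - D * J ^ 2) ^ 2 + 4 * σ * J ^ 2 - K * J ^ 4)
          * Real.cos ((n : ℝ) * φ t / (m : ℝ) - φ₀)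
        = J ^ 2 * (r t ^ 2)⁻¹
              * (1 - D * r t ^ 2 + σ * Real.sqrt ((1 - D * r t ^ 2) ^ 2 - K * r t ^ 4))
            + D * J ^ 2 + 2 * G - 2 * E :=
  typeII_trajectory_orbit_equation_general m n hm hn D K G E J σ hJ hσ I hIopen hIconn r φ hr hφ
    hrpos hmet hmet' hang henergy hcrit
end

section
/- Let m, n be positive integers, K, G, E, J real constants with J ≠ 0, I ⊆ ℝ an open interval, and r : I → ℝ a differentiable function with r(φ) > 0 and 1 + K·r(φ)² > 0 for all φ ∈ I, satisfying the orbit equation (m²J²/(n²·r(φ)⁴·(1 + K·r(φ)²)))·r'(φ)² = 2E − 2(√(r(φ)⁻² + K) + G) − J²/r(φ)² for every φ ∈ I. Then the function u(φ) := √(r(φ)⁻² + K) is differentiable on I and satisfies ((mJ/n)·u'(φ))² = 2(E − G) + K·J² − 2·u(φ) − J²·u(φ)² for every φ ∈ I. -/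
open Real

/-! With `u = √(r⁻² + K)` one has `r² u² = 1 + K r²` and `u' = -r' / (r³ u)`, so
`u'² = r'² / (r⁴ (1 + K r²))`: the kinetic term of the orbit equation is exactly
`(m J / n)² u'²`. Its right-hand side becomes the stated quadratic in `u` after
substituting `r⁻² = u² - K`. -/

lemma inv_sq_add_pos {ρ K : ℝ} (hρ : ρ ≠ 0) (h : 0 < 1 + K * ρ ^ 2) : 0 < (ρ ^ 2)⁻¹ + K := by
  have : (ρ ^ 2)⁻¹ + K = (1 + K * ρ ^ 2) / ρ ^ 2 := by field_simp
  rw [this]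
  positivity

lemma HasDerivAt.sqrt_inv_sq_add {r : ℝ → ℝ} {r' φ : ℝ} (K : ℝ) (hr : HasDerivAt r r' φ)
    (hρ : r φ ≠ 0) (hpos : 0 < (r φ ^ 2)⁻¹ + K) :
    HasDerivAt (fun x => √((r x ^ 2)⁻¹ + K)) (-r' / (r φ ^ 3 * √((r φ ^ 2)⁻¹ + K))) φ := by
  have hinv : HasDerivAt (fun x => (r x ^ 2)⁻¹ + K) (-(2 * r φ ^ 1 * r') / (r φ ^ 2) ^ 2) φ := by
    simpa using ((hr.pow 2).inv (pow_ne_zero 2 hρ)).add_const K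
  convert hinv.sqrt hpos.ne' using 1
  field_simp

lemma sq_neg_div_mul_sqrt_inv_sq_add {ρ K : ℝ} (r' : ℝ) (hρ : ρ ≠ 0) (hK : 0 ≤ (ρ ^ 2)⁻¹ + K) :
    (-r' / (ρ ^ 3 * √((ρ ^ 2)⁻¹ + K))) ^ 2 = r' ^ 2 / (ρ ^ 4 * (1 + K * ρ ^ 2)) := by
  rw [div_pow, mul_pow, sq_sqrt hK]
  field_simp

lemma energy_eq_quadratic_sqrt_inv_sq_add {ρ K : ℝ} (E G J : ℝ) (hK : 0 ≤ (ρ ^ 2)⁻¹ + K) :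
    2 * E - 2 * (√((ρ ^ 2)⁻¹ + K) + G) - J ^ 2 / ρ ^ 2
      = 2 * (E - G) + K * J ^ 2 - 2 * √((ρ ^ 2)⁻¹ + K) - J ^ 2 * √((ρ ^ 2)⁻¹ + K) ^ 2 := by
  rw [sq_sqrt hK]
  ring

theorem typeI_change_of_variables_general
    (m n : ℕ)
    (K G E J : ℝ)
    (I : Set ℝ) (hIopen : IsOpen I)
    (r : ℝ → ℝ) (hr : DifferentiableOn ℝ r I)
    (hrpos : ∀ φ ∈ I, 0 < r φ)
    (hmet : ∀ φ ∈ I, 0 < 1 + K * r φ ^ 2)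
    (horbit : ∀ φ ∈ I,
      (m : ℝ) ^ 2 * J ^ 2 / ((n : ℝ) ^ 2 * r φ ^ 4 * (1 + K * r φ ^ 2))
          * (deriv r φ) ^ 2
        = 2 * E - 2 * (Real.sqrt ((r φ ^ 2)⁻¹ + K) + G) - J ^ 2 / r φ ^ 2) :
    DifferentiableOn ℝ (fun x => Real.sqrt ((r x ^ 2)⁻¹ + K)) I ∧
    ∀ φ ∈ I,
      ((m : ℝ) * J / (n : ℝ) * deriv (fun x => Real.sqrt ((r x ^ 2)⁻¹ + K)) φ) ^ 2
        = 2 * (E - G) + K * J ^ 2 - 2 * Real.sqrt ((r φ ^ 2)⁻¹ + K)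
            - J ^ 2 * (Real.sqrt ((r φ ^ 2)⁻¹ + K)) ^ 2 := by
  have hu : ∀ φ ∈ I, HasDerivAt (fun x => √((r x ^ 2)⁻¹ + K))
      (-deriv r φ / (r φ ^ 3 * √((r φ ^ 2)⁻¹ + K))) φ := fun φ hφ =>
    ((hr.differentiableAt (hIopen.mem_nhds hφ)).hasDerivAt).sqrt_inv_sq_add K
      (hrpos φ hφ).ne' (inv_sq_add_pos (hrpos φ hφ).ne' (hmet φ hφ))
  refine ⟨fun φ hφ => (hu φ hφ).differentiableAt.differentiableWithinAt, fun φ hφ => ?_⟩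
  have hρ := (hrpos φ hφ).ne'
  have hK := (inv_sq_add_pos hρ (hmet φ hφ)).le
  rw [(hu φ hφ).deriv, mul_pow, sq_neg_div_mul_sqrt_inv_sq_add _ hρ hK,
    ← energy_eq_quadratic_sqrt_inv_sq_add E G J hK, ← horbit φ hφ]
  simp only [div_eq_mul_inv, mul_inv]
  ring

/-- The change of variables `u = √(r⁻² + K)` transforms the type I orbit equation
into a harmonic-type equation (proof of Proposition 3.1, type I). -/
theorem typeI_change_of_variables
    (m n : ℕ) (hm : 0 < m) (hn : 0 < n)
    (K G E J : ℝ) (hJ : J ≠ 0)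
    (I : Set ℝ) (hIopen : IsOpen I) (hIconn : I.OrdConnected)
    (r : ℝ → ℝ) (hr : DifferentiableOn ℝ r I)
    (hrpos : ∀ φ ∈ I, 0 < r φ)
    (hmet : ∀ φ ∈ I, 0 < 1 + K * r φ ^ 2)
    (horbit : ∀ φ ∈ I,
      (m : ℝ) ^ 2 * J ^ 2 / ((n : ℝ) ^ 2 * r φ ^ 4 * (1 + K * r φ ^ 2))
          * (deriv r φ) ^ 2
        = 2 * E - 2 * (Real.sqrt ((r φ ^ 2)⁻¹ + K) + G) - J ^ 2 / r φ ^ 2) :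
    DifferentiableOn ℝ (fun x => Real.sqrt ((r x ^ 2)⁻¹ + K)) I ∧
    ∀ φ ∈ I,
      ((m : ℝ) * J / (n : ℝ) * deriv (fun x => Real.sqrt ((r x ^ 2)⁻¹ + K)) φ) ^ 2
        = 2 * (E - G) + K * J ^ 2 - 2 * Real.sqrt ((r φ ^ 2)⁻¹ + K)
            - J ^ 2 * (Real.sqrt ((r φ ^ 2)⁻¹ + K)) ^ 2 :=
  typeI_change_of_variables_general m n K G E J I hIopen r hr hrpos hmet horbit
end

section
/- Let m, n be positive integers, D, K, G, E, J real constants with J ≠ 0, σ ∈ {1, −1}, I ⊆ ℝ an open interval, and r : I → ℝ a differentiable function such that for all φ ∈ I: r(φ) > 0, (1 − D·r(φ)²)² − K·r(φ)⁴ > 0, and 1 − D·r(φ)² + σ·S(φ) > 0 where S(φ) := √((1 − D·r(φ)²)² − K·r(φ)⁴). Suppose r satisfies the orbit equation ((1 − D·r(φ)² + σ·S(φ))/(r(φ)⁴·S(φ)²))·(mJ/n)²·r'(φ)² = E − (G − σ·r(φ)²/(1 − D·r(φ)² + σ·S(φ))) − J²/(2r(φ)²) for every φ ∈ I. Then the function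 v(φ) := r(φ)⁻²·(1 − D·r(φ)² + σ·S(φ)) is differentiable on I and satisfies ((mJ/n)·v'(φ))² = 4(E − G)·v(φ) − J²·(v(φ)² + 2D·v(φ) + K) + 4σ for every φ ∈ I. -/
/-!
Write `w = 1 - D r²`, so that `S² = w² - K r⁴`, and use `σ² = 1`. Then `v = r⁻²(w + σS)`
obeys the quadratic relation `v² + 2Dv + K = 2v/r²` and, as a function of `r`, has
derivative `dv/dr = -2σv/(rS)`. Hence `((mJ/n) dv/dφ)²` is `4v` times the left side of the
orbit equation, and `4v` times its right side is `4(E - G)v + 4σ - 2J²v/r²`, which the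
quadratic relation turns into the claimed polynomial in `v`.
-/

open Real

noncomputable def bertrandS (D K x : ℝ) : ℝ := √((1 - D * x ^ 2) ^ 2 - K * x ^ 4)

noncomputable def bertrandV (D K σ x : ℝ) : ℝ :=
  (x ^ 2)⁻¹ * (1 - D * x ^ 2 + σ * bertrandS D K x)

section

variable {D K σ x : ℝ}

lemma bertrandS_sq (hA : 0 ≤ (1 - D * x ^ 2) ^ 2 - K * x ^ 4) :
    bertrandS D K x ^ 2 = (1 - D * x ^ 2) ^ 2 - K * x ^ 4 :=
  sq_sqrt hA

lemma bertrandV_sq_add_two_mul_add (hx : x ≠ 0) (hA : 0 ≤ (1 - D * x ^ 2) ^ 2 - K * x ^ 4)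
    (hσ : σ ^ 2 = 1) :
    bertrandV D K σ x ^ 2 + 2 * D * bertrandV D K σ x + K = 2 * bertrandV D K σ x / x ^ 2 := by
  unfold bertrandV
  field_simp
  linear_combination bertrandS D K x ^ 2 * hσ + bertrandS_sq hA

lemma hasDerivAt_bertrandS (hA : 0 < (1 - D * x ^ 2) ^ 2 - K * x ^ 4) :
    HasDerivAt (bertrandS D K)
      (-2 * x * (D * (1 - D * x ^ 2) + K * x ^ 2) / bertrandS D K x) x := by
  have h := ((((hasDerivAt_pow 2 x).const_mul D).const_sub 1).fun_pow 2).fun_sub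
    ((hasDerivAt_pow 4 x).const_mul K) |>.sqrt hA.ne'
  refine h.congr_deriv ?_
  unfold bertrandS
  field_simp
  ring

lemma hasDerivAt_bertrandV (hx : x ≠ 0) (hA : 0 < (1 - D * x ^ 2) ^ 2 - K * x ^ 4)
    (hσ : σ ^ 2 = 1) :
    HasDerivAt (bertrandV D K σ) (-2 * σ * bertrandV D K σ x / (x * bertrandS D K x)) x := by
  have hSne : bertrandS D K x ≠ 0 := (sqrt_pos.mpr hA).ne'
  have h := ((hasDerivAt_pow 2 x).fun_inv (pow_ne_zero 2 hx)).fun_mul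
    ((((hasDerivAt_pow 2 x).const_mul D).const_sub 1).fun_add
      ((hasDerivAt_bertrandS hA).const_mul σ))
  refine h.congr_deriv ?_
  unfold bertrandV
  field_simp
  linear_combination (2 * x * bertrandS D K x) * hσ - (2 * x * σ) * bertrandS_sq hA.le

lemma sq_mul_deriv_bertrandV_of_orbit {p t E G J : ℝ} (hx : x ≠ 0)
    (hA : 0 < (1 - D * x ^ 2) ^ 2 - K * x ^ 4) (hP : 1 - D * x ^ 2 + σ * bertrandS D K x ≠ 0)
    (hσ : σ ^ 2 = 1)
    (horbit : (1 - D * x ^ 2 + σ * bertrandS D K x) / (x ^ 4 * bertrandS D K x ^ 2) * t ^ 2 * p ^ 2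
      = E - (G - σ * x ^ 2 / (1 - D * x ^ 2 + σ * bertrandS D K x)) - J ^ 2 / (2 * x ^ 2)) :
    (t * (-2 * σ * bertrandV D K σ x / (x * bertrandS D K x) * p)) ^ 2
      = 4 * (E - G) * bertrandV D K σ x
        - J ^ 2 * (bertrandV D K σ x ^ 2 + 2 * D * bertrandV D K σ x + K) + 4 * σ := by
  have hSne : bertrandS D K x ≠ 0 := (sqrt_pos.mpr hA).ne'
  rw [bertrandV_sq_add_two_mul_add hx hA.le hσ, bertrandV, inv_mul_eq_div]
  generalize 1 - D * x ^ 2 + σ * bertrandS D K x = P at hP horbit ⊢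
  calc (t * (-2 * σ * (P / x ^ 2) / (x * bertrandS D K x) * p)) ^ 2
      = 4 * (P / x ^ 2) * (P / (x ^ 4 * bertrandS D K x ^ 2) * t ^ 2 * p ^ 2) := by
        field_simp
        linear_combination 4 * t ^ 2 * p ^ 2 * hσ
    _ = 4 * (P / x ^ 2) * (E - (G - σ * x ^ 2 / P) - J ^ 2 / (2 * x ^ 2)) := by
        rw [horbit]
    _ = 4 * (E - G) * (P / x ^ 2) - J ^ 2 * (2 * (P / x ^ 2) / x ^ 2) + 4 * σ := by
        field_simp
        ring

end

theorem typeII_change_of_variables_general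
    (m n : ℕ)
    (D K G E J σ : ℝ) (hσ : σ = 1 ∨ σ = -1)
    (I : Set ℝ) (hIopen : IsOpen I)
    (r : ℝ → ℝ) (hr : DifferentiableOn ℝ r I)
    (hrpos : ∀ φ ∈ I, 0 < r φ)
    (hmet : ∀ φ ∈ I, 0 < (1 - D * r φ ^ 2) ^ 2 - K * r φ ^ 4)
    (hmet' : ∀ φ ∈ I,
      0 < 1 - D * r φ ^ 2 + σ * Real.sqrt ((1 - D * r φ ^ 2) ^ 2 - K * r φ ^ 4))
    (horbit : ∀ φ ∈ I,
      (1 - D * r φ ^ 2 + σ * Real.sqrt ((1 - D * r φ ^ 2) ^ 2 - K * r φ ^ 4))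
            / (r φ ^ 4 * (Real.sqrt ((1 - D * r φ ^ 2) ^ 2 - K * r φ ^ 4)) ^ 2)
          * ((m : ℝ) * J / (n : ℝ)) ^ 2 * (deriv r φ) ^ 2
        = E
          - (G - σ * r φ ^ 2
              / (1 - D * r φ ^ 2 + σ * Real.sqrt ((1 - D * r φ ^ 2) ^ 2 - K * r φ ^ 4)))
          - J ^ 2 / (2 * r φ ^ 2)) :
    DifferentiableOn ℝ
        (fun x => (r x ^ 2)⁻¹
          * (1 - D * r x ^ 2 + σ * Real.sqrt ((1 - D * r x ^ 2) ^ 2 - K * r x ^ 4))) I ∧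
    ∀ φ ∈ I,
      ((m : ℝ) * J / (n : ℝ)
            * deriv (fun x => (r x ^ 2)⁻¹
                * (1 - D * r x ^ 2
                    + σ * Real.sqrt ((1 - D * r x ^ 2) ^ 2 - K * r x ^ 4))) φ) ^ 2
        = 4 * (E - G)
              * ((r φ ^ 2)⁻¹
                * (1 - D * r φ ^ 2
                    + σ * Real.sqrt ((1 - D * r φ ^ 2) ^ 2 - K * r φ ^ 4)))
          - J ^ 2
              * (((r φ ^ 2)⁻¹
                    * (1 - D * r φ ^ 2
                        + σ * Real.sqrt ((1 - D * r φ ^ 2) ^ 2 - K * r φ ^ 4))) ^ 2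
                + 2 * D * ((r φ ^ 2)⁻¹
                    * (1 - D * r φ ^ 2
                        + σ * Real.sqrt ((1 - D * r φ ^ 2) ^ 2 - K * r φ ^ 4)))
                + K)
          + 4 * σ := by
  have hσ2 : σ ^ 2 = 1 := by rcases hσ with rfl | rfl <;> norm_num
  have hv : ∀ φ ∈ I, HasDerivAt (bertrandV D K σ ∘ r)
      (-2 * σ * bertrandV D K σ (r φ) / (r φ * bertrandS D K (r φ)) * deriv r φ) φ :=
    fun φ hφ => (hasDerivAt_bertrandV (hrpos φ hφ).ne' (hmet φ hφ) hσ2).comp φ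
      (hr.differentiableAt (hIopen.mem_nhds hφ)).hasDerivAt
  refine ⟨fun φ hφ => (hv φ hφ).differentiableAt.differentiableWithinAt, fun φ hφ => ?_⟩
  change (_ * deriv (bertrandV D K σ ∘ r) φ) ^ 2 = _
  rw [(hv φ hφ).deriv]
  exact sq_mul_deriv_bertrandV_of_orbit (hrpos φ hφ).ne' (hmet φ hφ) (hmet' φ hφ).ne' hσ2
    (horbit φ hφ)

/-- The change of variables `v = r⁻²(1 - Dr² + σ√((1-Dr²)² - Kr⁴))` transforms the
type II orbit equation into a harmonic-type equation (proof of Proposition 3.1, type II). -/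
theorem typeII_change_of_variables
    (m n : ℕ) (hm : 0 < m) (hn : 0 < n)
    (D K G E J σ : ℝ) (hJ : J ≠ 0) (hσ : σ = 1 ∨ σ = -1)
    (I : Set ℝ) (hIopen : IsOpen I) (hIconn : I.OrdConnected)
    (r : ℝ → ℝ) (hr : DifferentiableOn ℝ r I)
    (hrpos : ∀ φ ∈ I, 0 < r φ)
    (hmet : ∀ φ ∈ I, 0 < (1 - D * r φ ^ 2) ^ 2 - K * r φ ^ 4)
    (hmet' : ∀ φ ∈ I,
      0 < 1 - D * r φ ^ 2 + σ * Real.sqrt ((1 - D * r φ ^ 2) ^ 2 - K * r φ ^ 4))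
    (horbit : ∀ φ ∈ I,
      (1 - D * r φ ^ 2 + σ * Real.sqrt ((1 - D * r φ ^ 2) ^ 2 - K * r φ ^ 4))
            / (r φ ^ 4 * (Real.sqrt ((1 - D * r φ ^ 2) ^ 2 - K * r φ ^ 4)) ^ 2)
          * ((m : ℝ) * J / (n : ℝ)) ^ 2 * (deriv r φ) ^ 2
        = E
          - (G - σ * r φ ^ 2
              / (1 - D * r φ ^ 2 + σ * Real.sqrt ((1 - D * r φ ^ 2) ^ 2 - K * r φ ^ 4)))
          - J ^ 2 / (2 * r φ ^ 2)) :
    DifferentiableOn ℝ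
        (fun x => (r x ^ 2)⁻¹
          * (1 - D * r x ^ 2 + σ * Real.sqrt ((1 - D * r x ^ 2) ^ 2 - K * r x ^ 4))) I ∧
    ∀ φ ∈ I,
      ((m : ℝ) * J / (n : ℝ)
            * deriv (fun x => (r x ^ 2)⁻¹
                * (1 - D * r x ^ 2
                    + σ * Real.sqrt ((1 - D * r x ^ 2) ^ 2 - K * r x ^ 4))) φ) ^ 2
        = 4 * (E - G)
              * ((r φ ^ 2)⁻¹
                * (1 - D * r φ ^ 2
                    + σ * Real.sqrt ((1 - D * r φ ^ 2) ^ 2 - K * r φ ^ 4)))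
          - J ^ 2
              * (((r φ ^ 2)⁻¹
                    * (1 - D * r φ ^ 2
                        + σ * Real.sqrt ((1 - D * r φ ^ 2) ^ 2 - K * r φ ^ 4))) ^ 2
                + 2 * D * ((r φ ^ 2)⁻¹
                    * (1 - D * r φ ^ 2
                        + σ * Real.sqrt ((1 - D * r φ ^ 2) ^ 2 - K * r φ ^ 4)))
                + K)
          + 4 * σ :=
  typeII_change_of_variables_general m n D K G E J σ hσ I hIopen r hr hrpos hmet hmet' horbit
end

section
/- Let m, n be positive integers, D, K, G, E, J real constants with J ≠ 0, σ ∈ {1, −1}, I ⊆ ℝ a nonempty open interval, and v : I → ℝ a twice continuously differentiable function satisfying ((mJ/n)·v'(φ))² = 4(E − G)·v(φ) − J²·(v(φ)² + 2D·v(φ) + K) + 4σ for every φ ∈ I, and such that the set {φ ∈ I : v'(φ) = 0} has empty interior in I. Then there exists a real constant φ₀ such that J²·(v(φ) + D) + 2G − 2E = √((2E − 2G − D·J²)² + 4σ·J² − K·J⁴) · cos(n·φ/m − φ₀) for all φ ∈ I. -/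
/-!
Put `k = n / m` and `w = J² (v + D) + 2G - 2E`. The orbit equation says exactly that the energy
`w'² + k² w²` equals the constant `k² A`, where `A` is the radicand of the claim. Differentiating,
`w' (w'' + k² w) = 0`; since `w'` vanishes on no open subinterval and `w''` is continuous, `w`
solves the harmonic oscillator `w'' = -k² w`, so `w = a cos (k φ) + b sin (k φ)` with `a² + b² = A`.
-/

open Real

theorem ContinuousOn.eq_zero_of_mul_eq_zero {I : Set ℝ} {f g : ℝ → ℝ} (hI : IsOpen I)
    (hf : ContinuousOn f I) (hg : interior {x | x ∈ I ∧ g x = 0} = ∅)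
    (hgf : ∀ x ∈ I, g x * f x = 0) : ∀ x ∈ I, f x = 0 := by
  intro x hx
  by_contra hfx
  have hU : IsOpen (I ∩ f ⁻¹' {0}ᶜ) := hf.isOpen_inter_preimage hI isOpen_compl_singleton
  have hsub : I ∩ f ⁻¹' {0}ᶜ ⊆ {x | x ∈ I ∧ g x = 0} := fun y ⟨hyI, hfy⟩ =>
    ⟨hyI, (mul_eq_zero.1 (hgf y hyI)).resolve_right hfy⟩
  have := hU.subset_interior_iff.2 hsub
  rw [hg] at this
  exact this ⟨hx, hfx⟩

theorem mul_add_sq_mul_eq_zero_of_energy_const {I : Set ℝ} (hI : IsOpen I) {k C : ℝ}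
    {w w' w'' : ℝ → ℝ} (hw : ∀ x ∈ I, HasDerivAt w (w' x) x)
    (hw' : ∀ x ∈ I, HasDerivAt w' (w'' x) x)
    (hE : ∀ x ∈ I, w' x ^ 2 + k ^ 2 * w x ^ 2 = C) :
    ∀ x ∈ I, w' x * (w'' x + k ^ 2 * w x) = 0 := by
  intro x hx
  have hderiv : HasDerivAt (fun y => w' y ^ 2 + k ^ 2 * w y ^ 2)
      (2 * w' x ^ 1 * w'' x + k ^ 2 * (2 * w x ^ 1 * w' x)) x :=
    ((hw' x hx).pow 2).add (((hw x hx).pow 2).const_mul _)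
  have hconst : HasDerivAt (fun y => w' y ^ 2 + k ^ 2 * w y ^ 2) 0 x :=
    (hasDerivAt_const x C).congr_of_eventuallyEq <|
      Filter.eventually_of_mem (hI.mem_nhds hx) hE
  linear_combination hderiv.unique hconst / 2

theorem exists_const_of_hasDerivAt_zero {I : Set ℝ} (hIo : IsOpen I) (hIc : IsPreconnected I)
    {f : ℝ → ℝ} (hf : ∀ x ∈ I, HasDerivAt f 0 x) : ∃ c, ∀ x ∈ I, f x = c :=
  hIo.exists_is_const_of_deriv_eq_zero hIc
    (fun x hx => (hf x hx).differentiableAt.differentiableWithinAt)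
    (fun x hx => (hf x hx).deriv)

theorem exists_eq_mul_cos_add_mul_sin {I : Set ℝ} (hIo : IsOpen I) (hIc : IsPreconnected I)
    {k : ℝ} (hk : k ≠ 0) {w w' : ℝ → ℝ} (hw : ∀ x ∈ I, HasDerivAt w (w' x) x)
    (hw' : ∀ x ∈ I, HasDerivAt w' (-(k ^ 2 * w x)) x) :
    ∃ a b : ℝ, ∀ x ∈ I, w x = a * cos (k * x) + b * sin (k * x) ∧
      w' x = k * (b * cos (k * x) - a * sin (k * x)) := by
  have hkx (x : ℝ) : HasDerivAt (fun y => k * y) k x := by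
    simpa using (hasDerivAt_id x).const_mul k
  obtain ⟨a, ha⟩ : ∃ a, ∀ x ∈ I, w x * cos (k * x) - w' x / k * sin (k * x) = a := by
    refine exists_const_of_hasDerivAt_zero hIo hIc fun x hx => ?_
    refine (((hw x hx).mul (hkx x).cos).sub
      (((hw' x hx).div_const k).mul (hkx x).sin)).congr_deriv ?_
    field_simp
    ring
  obtain ⟨b, hb⟩ : ∃ b, ∀ x ∈ I, w x * sin (k * x) + w' x / k * cos (k * x) = b := by
    refine exists_const_of_hasDerivAt_zero hIo hIc fun x hx => ?_
    refine (((hw x hx).mul (hkx x).sin).add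
      (((hw' x hx).div_const k).mul (hkx x).cos)).congr_deriv ?_
    field_simp
    ring
  refine ⟨a, b, fun x hx => ⟨?_, ?_⟩⟩
  · rw [← ha x hx, ← hb x hx]
    linear_combination (-w x) * sin_sq_add_cos_sq (k * x)
  · rw [← ha x hx, ← hb x hx]
    field_simp
    linear_combination (-w' x) * sin_sq_add_cos_sq (k * x)

theorem mul_cos_add_mul_sin_eq (a b t : ℝ) :
    a * cos t + b * sin t = √(a ^ 2 + b ^ 2) * cos (t - Complex.arg ⟨a, b⟩) := by
  have hnorm : ‖(⟨a, b⟩ : ℂ)‖ = √(a ^ 2 + b ^ 2) := by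
    rw [Complex.norm_def, Complex.normSq_mk]
    ring_nf
  have hre := Complex.norm_mul_cos_arg ⟨a, b⟩
  have him := Complex.norm_mul_sin_arg ⟨a, b⟩
  rw [← hnorm, cos_sub]
  linear_combination (-cos t) * hre - sin t * him

theorem typeII_integrated_orbit_general
    (m n : ℕ) (hm : 0 < m) (hn : 0 < n)
    (D K G E J σ : ℝ) (hJ : J ≠ 0)
    (I : Set ℝ) (hIopen : IsOpen I) (hIconn : I.OrdConnected) (hIne : I.Nonempty)
    (v : ℝ → ℝ) (hv : ContDiffOn ℝ 2 v I)
    (hode : ∀ φ ∈ I,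
      ((m : ℝ) * J / (n : ℝ) * deriv v φ) ^ 2
        = 4 * (E - G) * v φ - J ^ 2 * ((v φ) ^ 2 + 2 * D * v φ + K) + 4 * σ)
    (hcrit : interior {φ | φ ∈ I ∧ deriv v φ = 0} = ∅) :
    ∃ φ₀ : ℝ, ∀ φ ∈ I,
      J ^ 2 * (v φ + D) + 2 * G - 2 * E
        = Real.sqrt ((2 * E - 2 * G - D * J ^ 2) ^ 2 + 4 * σ * J ^ 2 - K * J ^ 4)
            * Real.cos ((n : ℝ) * φ / (m : ℝ) - φ₀) := by
  set k : ℝ := n / m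
  have hk : k ≠ 0 := div_ne_zero (by positivity) (by positivity)
  set A := (2 * E - 2 * G - D * J ^ 2) ^ 2 + 4 * σ * J ^ 2 - K * J ^ 4
  set w : ℝ → ℝ := fun φ => J ^ 2 * (v φ + D) + 2 * G - 2 * E
  have hv' : ContDiffOn ℝ 1 (deriv v) I := hv.deriv_of_isOpen hIopen (by norm_num)
  have hw (φ) (hφ : φ ∈ I) : HasDerivAt w (J ^ 2 * deriv v φ) φ :=
    ((((hv.differentiableOn (by norm_num)).differentiableAt (hIopen.mem_nhds hφ)).hasDerivAt
      |>.add_const D).const_mul (J ^ 2) |>.add_const _).sub_const _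
  have hw' (φ) (hφ : φ ∈ I) :
      HasDerivAt (fun ψ => J ^ 2 * deriv v ψ) (J ^ 2 * deriv (deriv v) φ) φ :=
    (((hv'.differentiableOn one_ne_zero).differentiableAt
      (hIopen.mem_nhds hφ)).hasDerivAt).const_mul (J ^ 2)
  have henergy (φ) (hφ : φ ∈ I) : (J ^ 2 * deriv v φ) ^ 2 + k ^ 2 * w φ ^ 2 = k ^ 2 * A := by
    have h := hode φ hφ
    simp only [k, w, A]
    field_simp at h ⊢
    linear_combination J ^ 2 * h
  have hosc : ∀ φ ∈ I, J ^ 2 * deriv (deriv v) φ + k ^ 2 * w φ = 0 := by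
    refine ContinuousOn.eq_zero_of_mul_eq_zero hIopen ?_ hcrit fun φ hφ => ?_
    · exact continuousOn_const.mul (hv'.continuousOn_deriv_of_isOpen hIopen le_rfl) |>.add
        (continuousOn_const.mul fun φ hφ => (hw φ hφ).continuousAt.continuousWithinAt)
    · have := mul_add_sq_mul_eq_zero_of_energy_const hIopen hw hw' henergy φ hφ
      rw [mul_assoc] at this
      exact (mul_eq_zero.1 this).resolve_left (pow_ne_zero 2 hJ)
  obtain ⟨a, b, hab⟩ := exists_eq_mul_cos_add_mul_sin hIopen hIconn.isPreconnected hk hw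
    fun φ hφ => (hw' φ hφ).congr_deriv (by linear_combination hosc φ hφ)
  have hA : A = a ^ 2 + b ^ 2 := by
    obtain ⟨φ, hφ⟩ := hIne
    obtain ⟨hwφ, hw'φ⟩ := hab φ hφ
    have h := henergy φ hφ
    rw [hwφ, hw'φ] at h
    refine mul_left_cancel₀ (pow_ne_zero 2 hk) ?_
    linear_combination -h + k ^ 2 * (a ^ 2 + b ^ 2) * sin_sq_add_cos_sq (k * φ)
  refine ⟨Complex.arg ⟨a, b⟩, fun φ hφ => ?_⟩
  rw [show (n : ℝ) * φ / m = k * φ by ring, hA, ← mul_cos_add_mul_sin_eq]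
  exact (hab φ hφ).1

/-- Integration of the transformed type II orbit equation. -/
theorem typeII_integrated_orbit
    (m n : ℕ) (hm : 0 < m) (hn : 0 < n)
    (D K G E J σ : ℝ) (hJ : J ≠ 0) (hσ : σ = 1 ∨ σ = -1)
    (I : Set ℝ) (hIopen : IsOpen I) (hIconn : I.OrdConnected) (hIne : I.Nonempty)
    (v : ℝ → ℝ) (hv : ContDiffOn ℝ 2 v I)
    (hode : ∀ φ ∈ I,
      ((m : ℝ) * J / (n : ℝ) * deriv v φ) ^ 2
        = 4 * (E - G) * v φ - J ^ 2 * ((v φ) ^ 2 + 2 * D * v φ + K) + 4 * σ)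
    (hcrit : interior {φ | φ ∈ I ∧ deriv v φ = 0} = ∅) :
    ∃ φ₀ : ℝ, ∀ φ ∈ I,
      J ^ 2 * (v φ + D) + 2 * G - 2 * E
        = Real.sqrt ((2 * E - 2 * G - D * J ^ 2) ^ 2 + 4 * σ * J ^ 2 - K * J ^ 4)
            * Real.cos ((n : ℝ) * φ / (m : ℝ) - φ₀) :=
  typeII_integrated_orbit_general m n hm hn D K G E J σ hJ I hIopen hIconn hIne v hv hode hcrit
end

section
/- Let m, n be positive integers, K, G, E, J, φ₀ real constants with J ≠ 0, and suppose C := 1 + 2J²(E − G) + K·J⁴ ≥ 0. Define u : ℝ → ℝ by u(φ) := (√C · cos(n·φ/m − φ₀) − 1)/J². Then u satisfies ((mJ/n)·u'(φ))² = 2(E − G) + K·J² − 2·u(φ) − J²·u(φ)² for all φ ∈ ℝ. -/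
/-!
Differentiating the cosine profile gives `(mJ/n) u' = -√C sin θ / J`, and `sin² θ + cos² θ = 1`
turns its square into a quadratic in `u` whose constant term is `(C - 1) / J² = 2(E - G) + K J²`.
-/

open Real

theorem hasDerivAt_cos_orbit (A J k φ₀ x : ℝ) :
    HasDerivAt (fun φ => (A * cos (k * φ - φ₀) - 1) / J ^ 2)
      (-(A * k * sin (k * x - φ₀)) / J ^ 2) x := by
  have hphase : HasDerivAt (fun φ => k * φ - φ₀) k x := by
    simpa using ((hasDerivAt_id x).const_mul k).sub_const φ₀
  exact (((hphase.cos.const_mul A).sub_const 1).div_const (J ^ 2)).congr_deriv (by ring)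

theorem cos_orbit_energy (A J θ : ℝ) (hJ : J ≠ 0) :
    (J * (-(A * sin θ) / J ^ 2)) ^ 2
      = (A ^ 2 - 1) / J ^ 2 - 2 * ((A * cos θ - 1) / J ^ 2)
        - J ^ 2 * ((A * cos θ - 1) / J ^ 2) ^ 2 := by
  field_simp
  linear_combination A ^ 2 * sin_sq_add_cos_sq θ

/-- The closed-form type I orbits solve the transformed type I orbit equation. -/
theorem typeI_orbit_formula_solves_ode
    (m n : ℕ) (hm : 0 < m) (hn : 0 < n)
    (K G E J φ₀ : ℝ) (hJ : J ≠ 0)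
    (C : ℝ) (hCdef : C = 1 + 2 * J ^ 2 * (E - G) + K * J ^ 4) (hC : 0 ≤ C)
    (u : ℝ → ℝ)
    (hu : u = fun φ =>
      (Real.sqrt C * Real.cos ((n : ℝ) * φ / (m : ℝ) - φ₀) - 1) / J ^ 2) :
    ∀ φ : ℝ,
      ((m : ℝ) * J / (n : ℝ) * deriv u φ) ^ 2
        = 2 * (E - G) + K * J ^ 2 - 2 * u φ - J ^ 2 * (u φ) ^ 2 := by
  intro φ
  have hm' : (m : ℝ) ≠ 0 := by positivity
  have hn' : (n : ℝ) ≠ 0 := by positivity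
  simp_rw [mul_div_right_comm (n : ℝ) _ (m : ℝ)] at hu
  set θ := (n : ℝ) / m * φ - φ₀
  have hscale : (m : ℝ) * J / n * (n / m) = J := by field_simp
  have hspeed : (m : ℝ) * J / n * deriv u φ = J * (-(√C * sin θ) / J ^ 2) := by
    rw [hu, (hasDerivAt_cos_orbit _ _ _ _ φ).deriv]
    linear_combination -(√C * sin θ) / J ^ 2 * hscale
  have henergy : (√C ^ 2 - 1) / J ^ 2 = 2 * (E - G) + K * J ^ 2 := by
    rw [sq_sqrt hC, hCdef]
    field_simp
    ring
  rw [hspeed, cos_orbit_energy _ _ _ hJ, henergy, hu]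
end

section
/- Let m, n be positive integers, D, K, G, E, J, φ₀ real constants with J ≠ 0, σ ∈ {1, −1}, and suppose C₂ := (2E − 2G − D·J²)² + 4σ·J² − K·J⁴ ≥ 0. Define v : ℝ → ℝ by v(φ) := (√C₂ · cos(n·φ/m − φ₀) + 2(E − G) − D·J²)/J². Then v satisfies ((mJ/n)·v'(φ))² = 4(E − G)·v(φ) − J²·(v(φ)² + 2D·v(φ) + K) + 4σ for all φ ∈ ℝ. -/
/-!
The orbit is an affine image of the harmonic oscillator `u = A cos (ω φ - φ₀) + B`, whose energy
`u'² + ω² (u - B)²` is the constant `ω² A²`. With `ω = n / m`, `A = √C₂ / J²` and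
`B = (2(E - G) - D J²) / J²` the orbit equation is this conservation law multiplied by `(m J / n)²`,
since `C₂ - (J² B)² = 4 σ J² - K J⁴`.
-/

open Real

theorem deriv_sq_add_sq_of_eq_cos {u : ℝ → ℝ} {A B ω φ₀ : ℝ}
    (hu : ∀ x, u x = A * cos (ω * x - φ₀) + B) (φ : ℝ) :
    deriv u φ ^ 2 + ω ^ 2 * (u φ - B) ^ 2 = ω ^ 2 * A ^ 2 := by
  have hderiv : HasDerivAt u (-(A * sin (ω * φ - φ₀) * ω)) φ := by
    rw [funext hu]
    exact ((((hasDerivAt_id' φ).const_mul ω).sub_const φ₀).cos.const_mul A).add_const B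
      |>.congr_deriv (by ring)
  rw [hderiv.deriv, hu]
  linear_combination ω ^ 2 * A ^ 2 * sin_sq_add_cos_sq (ω * φ - φ₀)

theorem typeII_orbit_formula_solves_ode_general
    (m n : ℕ) (hm : 0 < m) (hn : 0 < n)
    (D K G E J φ₀ σ : ℝ) (hJ : J ≠ 0)
    (C₂ : ℝ)
    (hCdef : C₂ = (2 * E - 2 * G - D * J ^ 2) ^ 2 + 4 * σ * J ^ 2 - K * J ^ 4)
    (hC : 0 ≤ C₂)
    (v : ℝ → ℝ)
    (hv : v = fun φ =>
      (Real.sqrt C₂ * Real.cos ((n : ℝ) * φ / (m : ℝ) - φ₀)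
        + 2 * (E - G) - D * J ^ 2) / J ^ 2) :
    ∀ φ : ℝ,
      ((m : ℝ) * J / (n : ℝ) * deriv v φ) ^ 2
        = 4 * (E - G) * v φ - J ^ 2 * ((v φ) ^ 2 + 2 * D * v φ + K) + 4 * σ := by
  intro φ
  have hm' : (m : ℝ) ≠ 0 := by positivity
  have hn' : (n : ℝ) ≠ 0 := by positivity
  have hv_cos : ∀ x, v x = √C₂ / J ^ 2 * cos (n / m * x - φ₀)
      + (2 * (E - G) - D * J ^ 2) / J ^ 2 := fun x => by
    simp only [hv, mul_div_right_comm (n : ℝ) x]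
    ring
  have henergy := deriv_sq_add_sq_of_eq_cos hv_cos φ
  rw [div_pow √C₂, sq_sqrt hC, hCdef] at henergy
  linear_combination (norm := skip) (m / n * J) ^ 2 * henergy
  field_simp
  ring

/-- The closed-form type II orbits solve the transformed type II orbit equation. -/
theorem typeII_orbit_formula_solves_ode
    (m n : ℕ) (hm : 0 < m) (hn : 0 < n)
    (D K G E J φ₀ σ : ℝ) (hJ : J ≠ 0) (hσ : σ = 1 ∨ σ = -1)
    (C₂ : ℝ)
    (hCdef : C₂ = (2 * E - 2 * G - D * J ^ 2) ^ 2 + 4 * σ * J ^ 2 - K * J ^ 4)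
    (hC : 0 ≤ C₂)
    (v : ℝ → ℝ)
    (hv : v = fun φ =>
      (Real.sqrt C₂ * Real.cos ((n : ℝ) * φ / (m : ℝ) - φ₀)
        + 2 * (E - G) - D * J ^ 2) / J ^ 2) :
    ∀ φ : ℝ,
      ((m : ℝ) * J / (n : ℝ) * deriv v φ) ^ 2
        = 4 * (E - G) * v φ - J ^ 2 * ((v φ) ^ 2 + 2 * D * v φ + K) + 4 * σ :=
  typeII_orbit_formula_solves_ode_general m n hm hn D K G E J φ₀ σ hJ C₂ hCdef hC v hv
end

section
/- Let I ⊆ ℝ be an open interval, r, φ : I → ℝ differentiable functions with r(t) > 0 for all t, and define the curve q : I → ℝ³ by q(t) = (r(t)·cos φ(t), r(t)·sin φ(t), 0) and its velocity p(t) := q'(t). Fix t ∈ I with φ'(t) ≠ 0 and set J := r(t)²·φ'(t). Then (cos φ(t)/r(t))·q(t) + (sin φ(t)/(r(t)·J))·(q(t) × (q(t) × p(t))) = (1, 0, 0), where × denotes the cross product in ℝ³. -/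
/-!
In the moving frame `e_r = (cos φ, sin φ, 0)`, `e_φ = (-sin φ, cos φ, 0)` the curve is `q = r e_r`
and its velocity is `p = r' e_r + r φ' e_φ`. Expanding the vector triple product,
`q × (q × p) = (q ⬝ p) q - (q ⬝ q) p = -r³ φ' e_φ = -r J e_φ`, so the vector in question is
`cos φ e_r - sin φ e_φ`, which is `(1, 0, 0)` for every `φ`.
-/

open Real Matrix

noncomputable def radialVec (θ : ℝ) : Fin 3 → ℝ := ![cos θ, sin θ, 0]

noncomputable def angularVec (θ : ℝ) : Fin 3 → ℝ := ![-sin θ, cos θ, 0]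

lemma smul_radialVec (ρ θ : ℝ) : ρ • radialVec θ = ![ρ * cos θ, ρ * sin θ, 0] := by
  simp [radialVec]

lemma hasDerivAt_radialVec (θ : ℝ) : HasDerivAt radialVec (angularVec θ) θ := by
  rw [hasDerivAt_pi]
  intro i
  fin_cases i
  · simpa [radialVec, angularVec] using hasDerivAt_cos θ
  · simpa [radialVec, angularVec] using hasDerivAt_sin θ
  · simpa [radialVec, angularVec] using hasDerivAt_const θ (0 : ℝ)

lemma HasDerivAt.smul_radialVec_comp {r φ : ℝ → ℝ} {r' φ' t : ℝ}
    (hr : HasDerivAt r r' t) (hφ : HasDerivAt φ φ' t) :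
    HasDerivAt (fun u => r u • radialVec (φ u))
      (r' • radialVec (φ t) + (r t * φ') • angularVec (φ t)) t := by
  refine (hr.smul ((hasDerivAt_radialVec (φ t)).scomp t hφ)).congr_deriv ?_
  rw [add_comm, smul_smul, Function.comp_apply]

lemma radialVec_dotProduct_self (θ : ℝ) : radialVec θ ⬝ᵥ radialVec θ = 1 := by
  simp [radialVec, ← sq, cos_sq_add_sin_sq]

lemma radialVec_dotProduct_angularVec (θ : ℝ) : radialVec θ ⬝ᵥ angularVec θ = 0 := by
  simp [radialVec, angularVec]; ring

lemma cos_smul_radialVec_sub_sin_smul_angularVec (θ : ℝ) :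
    cos θ • radialVec θ - sin θ • angularVec θ = ![1, 0, 0] := by
  ext i
  fin_cases i <;> simp [radialVec, angularVec] <;> nlinarith [sin_sq_add_cos_sq θ]

lemma cross_cross_of_orthonormal {R : Type*} [CommRing R] {e f : Fin 3 → R}
    (hee : e ⬝ᵥ e = 1) (hef : e ⬝ᵥ f = 0) (ρ a b : R) :
    (ρ • e) ⨯₃ ((ρ • e) ⨯₃ (a • e + b • f)) = -(ρ ^ 2 * b) • f := by
  rw [cross_cross_eq_smul_sub_smul']
  simp only [dotProduct_add, dotProduct_smul, smul_dotProduct, hee, hef, smul_eq_mul]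
  module

theorem fradkin_unit_vector_general
    (I : Set ℝ) (hIopen : IsOpen I)
    (r φ : ℝ → ℝ)
    (hr : DifferentiableOn ℝ r I) (hφ : DifferentiableOn ℝ φ I)
    (hrpos : ∀ t ∈ I, 0 < r t)
    (q : ℝ → Fin 3 → ℝ)
    (hq : q = fun t => ![r t * Real.cos (φ t), r t * Real.sin (φ t), 0])
    (p : ℝ → Fin 3 → ℝ) (hp : p = fun t => deriv q t)
    (t : ℝ) (ht : t ∈ I) (hφ' : deriv φ t ≠ 0)
    (J : ℝ) (hJ : J = r t ^ 2 * deriv φ t) :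
    (Real.cos (φ t) / r t) • q t
        + (Real.sin (φ t) / (r t * J)) • (q t ⨯₃ (q t ⨯₃ p t))
      = ![1, 0, 0] := by
  have hq_polar : q = fun u => r u • radialVec (φ u) := by simp only [hq, smul_radialVec]
  have hp_polar : p t = deriv r t • radialVec (φ t) + (r t * deriv φ t) • angularVec (φ t) := by
    have hrt := (hr.differentiableAt (hIopen.mem_nhds ht)).hasDerivAt
    have hφt := (hφ.differentiableAt (hIopen.mem_nhds ht)).hasDerivAt
    rw [hp, hq_polar]
    exact (hrt.smul_radialVec_comp hφt).deriv
  have hr0 : r t ≠ 0 := (hrpos t ht).ne'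
  have hrJ : r t * J ≠ 0 := by rw [hJ]; positivity
  have h_triple : q t ⨯₃ (q t ⨯₃ p t) = -(r t * J) • angularVec (φ t) := by
    rw [hp_polar, hq_polar, cross_cross_of_orthonormal (radialVec_dotProduct_self _)
      (radialVec_dotProduct_angularVec _), hJ]
    ring_nf
  rw [h_triple, hq_polar, smul_smul, smul_smul, div_mul_cancel₀ _ hr0, mul_neg,
    div_mul_cancel₀ _ hrJ, neg_smul, ← sub_eq_add_neg, cos_smul_radialVec_sub_sin_smul_angularVec]

/-- Fradkin's observation: along a planar curve written in polar coordinates in the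
equatorial plane of ℝ³, the vector `(cos φ/r)q + (sin φ/(rJ)) q×(q×p)` is the constant
unit vector `(1,0,0)`. -/
theorem fradkin_unit_vector
    (I : Set ℝ) (hIopen : IsOpen I) (hIconn : I.OrdConnected)
    (r φ : ℝ → ℝ)
    (hr : DifferentiableOn ℝ r I) (hφ : DifferentiableOn ℝ φ I)
    (hrpos : ∀ t ∈ I, 0 < r t)
    (q : ℝ → Fin 3 → ℝ)
    (hq : q = fun t => ![r t * Real.cos (φ t), r t * Real.sin (φ t), 0])
    (p : ℝ → Fin 3 → ℝ) (hp : p = fun t => deriv q t)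
    (t : ℝ) (ht : t ∈ I) (hφ' : deriv φ t ≠ 0)
    (J : ℝ) (hJ : J = r t ^ 2 * deriv φ t) :
    (Real.cos (φ t) / r t) • q t
        + (Real.sin (φ t) / (r t * J)) • (q t ⨯₃ (q t ⨯₃ p t))
      = ![1, 0, 0] :=
  fradkin_unit_vector_general I hIopen r φ hr hφ hrpos q hq p hp t ht hφ' J hJ
end

section
/- Let m, n be positive integers and K a real constant. For every r > 0 with 1 + K·r² > 0, the function x ↦ √(x⁻² + K) has derivative at r equal to −(n/m)·r⁻²·h_I(r), where h_I(r) := (m/n)·(1 + K·r²)^{-1/2}. Consequently V_I(r) = √(r⁻² + K) + G is of the form A₁(∫^r r'⁻²·h_I(r') dr' + B₁) with A₁ = −n/m, i.e. V_I is an intrinsic Kepler potential of the type I Bertrand space. -/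
open Real

/-! The type I domain `{r > 0 | 1 + K r² > 0}` is an interval (for `K < 0` because `1 + K r²`
decreases in `r > 0`). On it `V_I` and `A₁ F` have the same derivative `A₁ r⁻² h_I`, hence differ
by a constant, which is absorbed into `B₁`. -/

def typeIDomain (K : ℝ) : Set ℝ := {x | 0 < x ∧ 0 < 1 + K * x ^ 2}

theorem isOpen_typeIDomain (K : ℝ) : IsOpen (typeIDomain K) :=
  (isOpen_lt continuous_const continuous_id).inter
    (isOpen_lt continuous_const (by fun_prop : Continuous fun x : ℝ => 1 + K * x ^ 2))

theorem ordConnected_typeIDomain (K : ℝ) : (typeIDomain K).OrdConnected := by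
  refine ⟨fun a ha b hb x hx => ⟨ha.1.trans_le hx.1, ?_⟩⟩
  have hx_sq : x ^ 2 ≤ b ^ 2 := pow_le_pow_left₀ (ha.1.le.trans hx.1) hx.2 2
  rcases le_total 0 K with hK | hK
  · positivity
  · nlinarith [hb.2]

theorem hasDerivAt_sqrt_inv_sq_add {K r : ℝ} (hr : 0 < r) (hK : 0 < 1 + K * r ^ 2) :
    HasDerivAt (fun x : ℝ => √((x ^ 2)⁻¹ + K)) (-(r ^ 2)⁻¹ * (√(1 + K * r ^ 2))⁻¹) r := by
  have hr_sq : r ^ 2 ≠ 0 := pow_ne_zero 2 hr.ne'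
  have h_arg : (r ^ 2)⁻¹ + K = (1 + K * r ^ 2) / r ^ 2 := by field_simp
  have h_sqrt : √((r ^ 2)⁻¹ + K) = √(1 + K * r ^ 2) / r := by
    rw [h_arg, sqrt_div hK.le, sqrt_sq hr.le]
  have h_inner : HasDerivAt (fun x : ℝ => (x ^ 2)⁻¹ + K) (-(2 * r) / (r ^ 2) ^ 2) r := by
    simpa using ((hasDerivAt_pow 2 r).inv hr_sq).add_const K
  have h_pos : (r ^ 2)⁻¹ + K ≠ 0 := by rw [h_arg]; positivity
  refine ((hasDerivAt_sqrt h_pos).comp r h_inner).congr_deriv ?_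
  have h_sqrt_ne : √(1 + K * r ^ 2) ≠ 0 := (sqrt_pos.mpr hK).ne'
  rw [h_sqrt]
  field_simp

/-- The type I Bertrand potential `V_I(r) = √(r⁻² + K) + G` is the intrinsic Kepler
potential of the type I Bertrand space: `x ↦ √(x⁻² + K)` has derivative
`-(n/m) r⁻² h_I(r)` with `h_I(r) = (m/n)(1 + Kr²)^{-1/2}`, and consequently `V_I` is of
the form `A₁(∫ r⁻² h_I + B₁)` with `A₁ = -n/m`. -/
theorem typeI_potential_is_intrinsic_Kepler
    (m n : ℕ) (hm : 0 < m) (hn : 0 < n) (K G : ℝ) :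
    (∀ r : ℝ, 0 < r → 0 < 1 + K * r ^ 2 →
      HasDerivAt (fun x : ℝ => Real.sqrt ((x ^ 2)⁻¹ + K))
        (-((n : ℝ) / (m : ℝ)) * (r ^ 2)⁻¹
          * ((m : ℝ) / (n : ℝ) * (Real.sqrt (1 + K * r ^ 2))⁻¹)) r) ∧
    ∀ F : ℝ → ℝ,
      (∀ x : ℝ, 0 < x → 0 < 1 + K * x ^ 2 →
        HasDerivAt F
          ((x ^ 2)⁻¹ * ((m : ℝ) / (n : ℝ) * (Real.sqrt (1 + K * x ^ 2))⁻¹)) x) →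
      ∃ B₁ : ℝ, ∀ x : ℝ, 0 < x → 0 < 1 + K * x ^ 2 →
        Real.sqrt ((x ^ 2)⁻¹ + K) + G = -((n : ℝ) / (m : ℝ)) * (F x + B₁) := by
  have hA₁ : -((n : ℝ) / m) ≠ 0 := by
    have : (0 : ℝ) < n / m := by positivity
    linarith
  have hV : ∀ r : ℝ, 0 < r → 0 < 1 + K * r ^ 2 →
      HasDerivAt (fun x : ℝ => √((x ^ 2)⁻¹ + K))
        (-((n : ℝ) / m) * (r ^ 2)⁻¹ * ((m : ℝ) / n * (√(1 + K * r ^ 2))⁻¹)) r :=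
    fun r hr hK => (hasDerivAt_sqrt_inv_sq_add hr hK).congr_deriv (by field_simp)
  refine ⟨hV, fun F hF => ?_⟩
  have hAF : ∀ x ∈ typeIDomain K, HasDerivAt (fun y => -((n : ℝ) / m) * F y)
      (-((n : ℝ) / m) * (x ^ 2)⁻¹ * ((m : ℝ) / n * (√(1 + K * x ^ 2))⁻¹)) x :=
    fun x hx => ((hF x hx.1 hx.2).const_mul _).congr_deriv (mul_assoc ..).symm
  obtain ⟨C, hC⟩ := (isOpen_typeIDomain K).exists_eq_add_of_deriv_eq
    (ordConnected_typeIDomain K).isPreconnected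
    (fun x hx => (hV x hx.1 hx.2).differentiableAt.differentiableWithinAt)
    (fun x hx => (hAF x hx).differentiableAt.differentiableWithinAt)
    (fun x hx => (hV x hx.1 hx.2).deriv.trans (hAF x hx).deriv.symm)
  refine ⟨(C + G) / -((n : ℝ) / m), fun x hx hKx => ?_⟩
  have hVx : √((x ^ 2)⁻¹ + K) = -((n : ℝ) / m) * F x + C := hC ⟨hx, hKx⟩
  rw [hVx]
  field_simp
  ring
end

section
/- Let D, K be real constants and σ ∈ {1, −1}. For every r > 0 with S(r) := √((1−Dr²)² − Kr⁴) satisfying (1−Dr²)² − Kr⁴ > 0 and 1 − Dr² + σ·S(r) > 0, the function v(x) := x⁻²·(1 − Dx² + σ·S(x)) is differentiable at r with derivative v'(r) = −2·σ·v(r)/(r·S(r)). -/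
/-!
In the variable `u = r⁻²` the radicand factors as `(1 - D r²)² - K r⁴ = r⁴ ((u - D)² - K)`, so
`v = f (u - D)` with `f t = t + σ √(t² - K)`. Since `σ² = 1`, `f` solves `f' = σ f / √(t² - K)`,
and the chain rule with `du/dr = -2 / r³` gives `v' = -2σ v / (r³ √((u - D)² - K)) = -2σ v / (r S)`.
-/

open Real

theorem hasDerivAt_add_mul_sqrt_sq_sub {σ K t : ℝ} (hσ : σ ^ 2 = 1) (ht : 0 < t ^ 2 - K) :
    HasDerivAt (fun t => t + σ * √(t ^ 2 - K))
      (σ * (t + σ * √(t ^ 2 - K)) / √(t ^ 2 - K)) t := by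
  have hsqrt : HasDerivAt (fun t => √(t ^ 2 - K)) (2 * t / (2 * √(t ^ 2 - K))) t := by
    simpa using ((hasDerivAt_pow 2 t).sub_const K).sqrt ht.ne'
  refine ((hasDerivAt_id t).add (hsqrt.const_mul σ)).congr_deriv ?_
  have hs : √(t ^ 2 - K) ≠ 0 := (sqrt_pos.mpr ht).ne'
  field_simp
  linear_combination (-√(t ^ 2 - K)) * hσ

theorem hasDerivAt_inv_sq_sub (D : ℝ) {r : ℝ} (hr : r ≠ 0) :
    HasDerivAt (fun x : ℝ => (x ^ 2)⁻¹ - D) (-(2 * r) / (r ^ 2) ^ 2) r := by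
  simpa using ((hasDerivAt_pow 2 r).inv (pow_ne_zero 2 hr)).sub_const D

section TypeII

variable {D K x : ℝ}

theorem typeII_radicand_eq (hx : x ≠ 0) :
    (1 - D * x ^ 2) ^ 2 - K * x ^ 4 = (x ^ 2) ^ 2 * (((x ^ 2)⁻¹ - D) ^ 2 - K) := by
  field_simp

theorem sqrt_typeII_radicand (hx : x ≠ 0) :
    √((1 - D * x ^ 2) ^ 2 - K * x ^ 4) = x ^ 2 * √(((x ^ 2)⁻¹ - D) ^ 2 - K) := by
  rw [typeII_radicand_eq hx, sqrt_mul (by positivity), sqrt_sq (by positivity)]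

theorem typeII_v_eq (σ : ℝ) (hx : x ≠ 0) :
    (x ^ 2)⁻¹ * (1 - D * x ^ 2 + σ * √((1 - D * x ^ 2) ^ 2 - K * x ^ 4))
      = ((x ^ 2)⁻¹ - D) + σ * √(((x ^ 2)⁻¹ - D) ^ 2 - K) := by
  rw [sqrt_typeII_radicand hx]
  field_simp

end TypeII

theorem typeII_v_hasDerivAt_general
    (D K σ : ℝ) (hσ : σ = 1 ∨ σ = -1)
    (r : ℝ) (hr : 0 < r)
    (hS : 0 < (1 - D * r ^ 2) ^ 2 - K * r ^ 4) :
    HasDerivAt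
      (fun x : ℝ => (x ^ 2)⁻¹
        * (1 - D * x ^ 2 + σ * Real.sqrt ((1 - D * x ^ 2) ^ 2 - K * x ^ 4)))
      (-2 * σ
          * ((r ^ 2)⁻¹
            * (1 - D * r ^ 2 + σ * Real.sqrt ((1 - D * r ^ 2) ^ 2 - K * r ^ 4)))
          / (r * Real.sqrt ((1 - D * r ^ 2) ^ 2 - K * r ^ 4))) r := by
  have hr0 : r ≠ 0 := hr.ne'
  have hσ2 : σ ^ 2 = 1 := by rcases hσ with rfl | rfl <;> norm_num
  have ht : 0 < ((r ^ 2)⁻¹ - D) ^ 2 - K :=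
    pos_of_mul_pos_right (typeII_radicand_eq hr0 ▸ hS) (by positivity)
  have hv := (hasDerivAt_add_mul_sqrt_sq_sub hσ2 ht).comp r (hasDerivAt_inv_sq_sub D hr0)
  refine (hv.congr_of_eventuallyEq ?_).congr_deriv ?_
  · filter_upwards [eventually_ne_nhds hr0] with x hx using typeII_v_eq σ hx
  · have hs : √(((r ^ 2)⁻¹ - D) ^ 2 - K) ≠ 0 := (sqrt_pos.mpr ht).ne'
    rw [typeII_v_eq σ hr0, sqrt_typeII_radicand hr0]
    field_simp

/-- The derivative of the transformed radial variable
`v(x) = x⁻²(1 - Dx² + σ√((1-Dx²)² - Kx⁴))` of a type II Bertrand space is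
`v'(r) = -2σ v(r)/(r S(r))`. -/
theorem typeII_v_hasDerivAt
    (D K σ : ℝ) (hσ : σ = 1 ∨ σ = -1)
    (r : ℝ) (hr : 0 < r)
    (hS : 0 < (1 - D * r ^ 2) ^ 2 - K * r ^ 4)
    (hpos : 0 < 1 - D * r ^ 2 + σ * Real.sqrt ((1 - D * r ^ 2) ^ 2 - K * r ^ 4)) :
    HasDerivAt
      (fun x : ℝ => (x ^ 2)⁻¹
        * (1 - D * x ^ 2 + σ * Real.sqrt ((1 - D * x ^ 2) ^ 2 - K * x ^ 4)))
      (-2 * σ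
          * ((r ^ 2)⁻¹
            * (1 - D * r ^ 2 + σ * Real.sqrt ((1 - D * r ^ 2) ^ 2 - K * r ^ 4)))
          / (r * Real.sqrt ((1 - D * r ^ 2) ^ 2 - K * r ^ 4))) r :=
  typeII_v_hasDerivAt_general D K σ hσ r hr hS
end
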